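/- arXiv:math/0306121 — 2 statements merged into one kernel-verified Lean document; each statement's English description precedes it below -/
import Mathlib

section
/- With the product x·y on H defined by ω(x·y,z) = ω([x,z],y), if the bracket [x,y]' := x·y − y·x satisfies the Jacobi identity on H, then the product is left-symmetric: x·(y·z) − (x·y)·z = y·(x·z) − (y·x)·z for all x, y, z ∈ H. -/
/-- If the bracket [x,y]' = x·y − y·x satisfies the Jacobi identity on H,
then the product defined by ω(x·y,z) = ω([x,z],y) is left-symmetric. -/
theorem stmt1 {L : Type*} [LieRing L] [LieAlgebra ℝ L] [FiniteDimensional ℝ L]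
    (H : Submodule ℝ L)
    (ω : L →ₗ[ℝ] L →ₗ[ℝ] ℝ)
    (hanti : ∀ x y : L, ω x y = - ω y x)
    (hcocycle : ∀ x y z : L, ω ⁅x, y⁆ z + ω ⁅z, x⁆ y + ω ⁅y, z⁆ x = 0)
    (hsub : ∀ x ∈ H, ∀ z ∈ H, ⁅x, z⁆ ∈ H)
    (hnondeg : ∀ x ∈ H, (∀ z ∈ H, ω x z = 0) → x = 0)
    (m : H → H → H)
    (hm : ∀ x y z : H, ω (m x y : L) (z : L) = ω ⁅(x : L), (z : L)⁆ (y : L))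
    (b : H → H → H) (hb : ∀ x y : H, b x y = m x y - m y x)
    (hjacobi : ∀ x y z : H, b (b x y) z + b (b y z) x + b (b z x) y = 0) :
    ∀ x y z : H, m x (m y z) - m (m x y) z = m y (m x z) - m (m y x) z := by
  -- Key: x·y − y·x equals the Lie bracket as elements of L.
  have key : ∀ x y : H, ((m x y : L) - (m y x : L)) = ⁅(x : L), (y : L)⁆ := by
    intro x y
    have hmem : ((m x y : L) - (m y x : L)) - ⁅(x : L), (y : L)⁆ ∈ H :=
      H.sub_mem (H.sub_mem (m x y).2 (m y x).2) (hsub x x.2 y y.2)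
    have h0 : ((m x y : L) - (m y x : L)) - ⁅(x : L), (y : L)⁆ = 0 := by
      apply hnondeg _ hmem
      intro w hw
      have h1 := hm x y ⟨w, hw⟩
      have h2 := hm y x ⟨w, hw⟩
      have h3 := hcocycle (x : L) (y : L) w
      have h4 : ω ⁅(x : L), w⁆ (y : L) = - ω ⁅w, (x : L)⁆ (y : L) := by
        rw [← lie_skew w (x : L), map_neg, LinearMap.neg_apply, neg_neg]
      simp only [map_sub, LinearMap.sub_apply]
      simp only [Subtype.coe_mk] at h1 h2
      linarith
    exact sub_eq_zero.mp h0
  intro x y z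
  have hgoal : ((m x (m y z) - m (m x y) z - (m y (m x z) - m (m y x) z) : H) : L) = 0 := by
    apply hnondeg _ (m x (m y z) - m (m x y) z - (m y (m x z) - m (m y x) z)).2
    intro w hw
    have hxw : ⁅(x : L), w⁆ ∈ H := hsub x x.2 w hw
    have hyw : ⁅(y : L), w⁆ ∈ H := hsub y y.2 w hw
    -- expand each of the four terms
    have e1 : ω (m x (m y z) : L) w = - ω ⁅(y : L), ⁅(x : L), w⁆⁆ (z : L) := by
      have := hm x (m y z) ⟨w, hw⟩
      have h2 := hm y z ⟨⁅(x : L), w⁆, hxw⟩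
      simp only [Subtype.coe_mk] at this h2
      rw [this, hanti ⁅(x : L), w⁆ (m y z : L), h2]
    have e2 : ω (m y (m x z) : L) w = - ω ⁅(x : L), ⁅(y : L), w⁆⁆ (z : L) := by
      have := hm y (m x z) ⟨w, hw⟩
      have h2 := hm x z ⟨⁅(y : L), w⁆, hyw⟩
      simp only [Subtype.coe_mk] at this h2
      rw [this, hanti ⁅(y : L), w⁆ (m x z : L), h2]
    have e3 : ω (m (m x y) z : L) w = ω ⁅((m x y : L)), w⁆ (z : L) := by
      have := hm (m x y) z ⟨w, hw⟩
      simpa using this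
    have e4 : ω (m (m y x) z : L) w = ω ⁅((m y x : L)), w⁆ (z : L) := by
      have := hm (m y x) z ⟨w, hw⟩
      simpa using this
    have e5 : ω ⁅((m x y : L)), w⁆ (z : L) - ω ⁅((m y x : L)), w⁆ (z : L)
        = ω ⁅⁅(x : L), (y : L)⁆, w⁆ (z : L) := by
      rw [← key x y]
      simp [sub_lie, map_sub]
    have e6 : ⁅⁅(x : L), (y : L)⁆, w⁆ = ⁅(x : L), ⁅(y : L), w⁆⁆ - ⁅(y : L), ⁅(x : L), w⁆⁆ :=
      lie_lie _ _ _
    have expand : ((m x (m y z) - m (m x y) z - (m y (m x z) - m (m y x) z) : H) : L)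
        = (m x (m y z) : L) - (m (m x y) z : L) - ((m y (m x z) : L) - (m (m y x) z : L)) := by
      push_cast; ring
    rw [expand]
    simp only [map_sub, LinearMap.sub_apply]
    rw [e1, e2, e3, e4]
    have := e5
    rw [e6, map_sub, LinearMap.sub_apply] at this
    linarith
  have : (m x (m y z) - m (m x y) z - (m y (m x z) - m (m y x) z) : H) = 0 := by
    exact_mod_cast hgoal
  exact sub_eq_zero.mp this
end

section
/- Let (G, H, j) be a CR Lie algebra with ideal I complementary to H. Then the induced complex structure j on the Lie algebra (H, [·,·]_H) (with bracket p∘[·,·]) satisfies [j(x), j(y)]_H = [x,y]_H + j([x,j(y)]_H + [j(x),y]_H) for all x,y ∈ H, i.e., (H, j) is a complex Lie algebra structure in the sense that the Nijenhuis-type condition holds. -/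
/-- With I an ideal complementary to H and [x,y]_H := p([x,y]),
the induced complex structure j on (H, [·,·]_H) satisfies
[j(x),j(y)]_H = [x,y]_H + j([x,j(y)]_H + [j(x),y]_H) for all x,y ∈ H. -/
theorem stmt7 {L : Type*} [LieRing L] [LieAlgebra ℝ L] [FiniteDimensional ℝ L]
    (H : Submodule ℝ L)
    (j : L →ₗ[ℝ] L)
    (hjH : ∀ x : L, j x ∈ H)
    (hj2 : ∀ x ∈ H, j (j x) = -x)
    (hcr1 : ∀ x ∈ H, ∀ y ∈ H, ⁅j x, j y⁆ - ⁅x, y⁆ ∈ H)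
    (hcr2 : ∀ x ∈ H, ∀ y ∈ H, ⁅j x, j y⁆ = ⁅x, y⁆ + j (⁅x, j y⁆ + ⁅j x, y⁆))
    (I : LieIdeal ℝ L)
    (hcompl : IsCompl H (I : Submodule ℝ L))
    (p : L →ₗ[ℝ] L)
    (hpH : ∀ x ∈ H, p x = x)
    (hpI : ∀ x ∈ (I : Submodule ℝ L), p x = 0) :
    ∀ x ∈ H, ∀ y ∈ H,
      p ⁅j x, j y⁆ = p ⁅x, y⁆ + j (p ⁅x, j y⁆ + p ⁅j x, y⁆) := by
  intro x hx y hy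
  set a := ⁅x, j y⁆ + ⁅j x, y⁆ with ha
  have h2 := hcr2 x hx y hy
  have h1 := hcr2 x hx (j y) (hjH y)
  rw [hj2 y hy] at h1
  have hja : ⁅j x, j y⁆ - ⁅x, y⁆ = j a := by rw [h2]; abel
  have key : j (j a) = -a := by
    have e1 : ⁅x, -y⁆ + ⁅j x, j y⁆ = j a := by
      rw [← hja, lie_neg]; abel
    rw [e1] at h1
    have e2 : j (j a) = ⁅j x, -y⁆ - ⁅x, j y⁆ := by rw [h1]; abel
    rw [e2, lie_neg, ha]; abel
  have haH : a ∈ H := by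
    have h := hjH (j a)
    rw [key] at h
    exact neg_mem_iff.mp h
  have pa : p ⁅x, j y⁆ + p ⁅j x, y⁆ = a := by
    rw [← map_add]; exact hpH a haH
  rw [pa, h2, map_add, hpH _ (hjH a)]
end
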